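/- Let s ≥ 1 and let Z_0, Z_1, …, Z_s be m×m real matrices. Set P_0 = I + (1/2)Z_0, Q_j = I − (1/2)Z_j for j = 1, …, s, assume each Q_j is invertible, and set Z = Z_0 + Z_1 + ⋯ + Z_s. Suppose vectors e_old, σ_0, ρ_0, ρ_1, …, ρ_s, w_0, w_1, …, w_s, e_new in ℝ^m satisfy: w_0 = Z·e_old + σ_0; w_j = Q_j^{-1}(w_{j−1} + ρ_j) for j = 1, …, s; and e_new = e_old + P_0·w_s + ρ_0. Then e_new = R·e_old + d, where R = I + P_0·Q_s^{-1}···Q_2^{-1}Q_1^{-1}·Z and d = P_0·Q_s^{-1}···Q_1^{-1}(σ_0 + ρ_1) + P_0·Q_s^{-1}···Q_2^{-1}·ρ_2 + ⋯ + P_0·Q_s^{-1}·ρ_s + ρ_0. -/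
import Mathlib


open Matrix

/-- `QInvProd Q j s = Q_s⁻¹ ⋯ Q_{j+1}⁻¹ Q_j⁻¹` (with `Q_j⁻¹` innermost, i.e. applied
first, and `Q_s⁻¹` outermost). -/
noncomputable def QInvProd {m : ℕ} (Q : ℕ → Matrix (Fin m) (Fin m) ℝ) (j s : ℕ) :
    Matrix (Fin m) (Fin m) ℝ :=
  ((List.range' j (s + 1 - j)).reverse.map fun i => (Q i)⁻¹).prod

lemma mulVec_sum' {m : ℕ} (A : Matrix (Fin m) (Fin m) ℝ) {ι : Type*} (t : Finset ι)
    (f : ι → Fin m → ℝ) : A *ᵥ (∑ i ∈ t, f i) = ∑ i ∈ t, A *ᵥ f i := by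
  simpa only [Matrix.mulVecLin_apply] using map_sum (Matrix.mulVecLin A) f t

lemma QInvProd_self {m : ℕ} (Q : ℕ → Matrix (Fin m) (Fin m) ℝ) (s : ℕ) :
    QInvProd Q s s = (Q s)⁻¹ := by
  simp [QInvProd]

lemma QInvProd_succ {m : ℕ} (Q : ℕ → Matrix (Fin m) (Fin m) ℝ) (j s : ℕ) (h : j ≤ s + 1) :
    QInvProd Q j (s + 1) = (Q (s + 1))⁻¹ * QInvProd Q j s := by
  unfold QInvProd
  have h1 : s + 1 + 1 - j = (s + 1 - j) + 1 := by omega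
  rw [h1, List.range'_concat]
  have h2 : j + (s + 1 - j) = s + 1 := by omega
  simp [h2]

lemma w_formula {m : ℕ} (Q : ℕ → Matrix (Fin m) (Fin m) ℝ) (ρ : ℕ → Fin m → ℝ)
    (w : ℕ → Fin m → ℝ) :
    ∀ s, 1 ≤ s → (∀ j, 1 ≤ j → j ≤ s → w j = (Q j)⁻¹ *ᵥ (w (j - 1) + ρ j)) →
      w s = QInvProd Q 1 s *ᵥ (w 0 + ρ 1) +
        ∑ j ∈ Finset.Icc 2 s, QInvProd Q j s *ᵥ ρ j := by
  intro s
  induction s with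
  | zero => omega
  | succ n ih =>
    intro _ hw
    rcases Nat.eq_or_lt_of_le (Nat.one_le_iff_ne_zero.mpr (Nat.succ_ne_zero n)) with h1 | h1
    · -- n + 1 = 1
      have hn : n = 0 := by omega
      subst hn
      have := hw 1 le_rfl le_rfl
      simp [this, QInvProd_self, Finset.Icc_eq_empty_of_lt]
    · have hn : 1 ≤ n := by omega
      have ihn := ih hn (fun j hj1 hj2 => hw j hj1 (by omega))
      have hstep := hw (n + 1) (by omega) le_rfl
      simp only [Nat.add_sub_cancel] at hstep
      rw [hstep, ihn]
      rw [Matrix.mulVec_add, Matrix.mulVec_add]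
      have hsum : Finset.Icc 2 (n + 1) = insert (n + 1) (Finset.Icc 2 n) :=
        (Finset.insert_Icc_right_eq_Icc_add_one (by omega)).symm
      rw [hsum, Finset.sum_insert (by simp), QInvProd_self,
        QInvProd_succ Q 1 n (by omega)]
      rw [show ((Q (n+1))⁻¹ * QInvProd Q 1 n) *ᵥ (w 0 + ρ 1)
            = (Q (n+1))⁻¹ *ᵥ (QInvProd Q 1 n *ᵥ (w 0 + ρ 1)) from
          (Matrix.mulVec_mulVec _ _ _).symm]
      have hsum2 : (Q (n+1))⁻¹ *ᵥ (∑ j ∈ Finset.Icc 2 n, QInvProd Q j n *ᵥ ρ j)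
          = ∑ j ∈ Finset.Icc 2 n, QInvProd Q j (n + 1) *ᵥ ρ j := by
        rw [mulVec_sum']
        refine Finset.sum_congr rfl fun j hj => ?_
        rw [QInvProd_succ Q j n (by simp at hj; omega), Matrix.mulVec_mulVec]
      rw [hsum2]
      abel

/-- Error recursion for the modified Douglas method with the explicit correction
performed last: `e_new = R e_old + d` with
`R = I + P_0 Q_s⁻¹⋯Q_1⁻¹ Z` and
`d = P_0 Q_s⁻¹⋯Q_1⁻¹ (σ_0 + ρ_1) + Σ_{j=2}^s P_0 Q_s⁻¹⋯Q_j⁻¹ ρ_j + ρ_0`. -/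
theorem error_recursion_explicit_last (m s : ℕ) (hs : 1 ≤ s)
    (Z : ℕ → Matrix (Fin m) (Fin m) ℝ)
    (P0 : Matrix (Fin m) (Fin m) ℝ) (Q : ℕ → Matrix (Fin m) (Fin m) ℝ)
    (hP0 : P0 = 1 + (1 / 2 : ℝ) • Z 0)
    (hQ : ∀ j, 1 ≤ j → j ≤ s → Q j = 1 - (1 / 2 : ℝ) • Z j)
    (hQinv : ∀ j, 1 ≤ j → j ≤ s → IsUnit (Q j))
    (Ztot : Matrix (Fin m) (Fin m) ℝ)
    (hZtot : Ztot = ∑ j ∈ Finset.range (s + 1), Z j)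
    (eold σ0 : Fin m → ℝ) (ρ : ℕ → Fin m → ℝ)
    (w : ℕ → Fin m → ℝ) (enew : Fin m → ℝ)
    (hw0 : w 0 = Ztot *ᵥ eold + σ0)
    (hw : ∀ j, 1 ≤ j → j ≤ s → w j = (Q j)⁻¹ *ᵥ (w (j - 1) + ρ j))
    (henew : enew = eold + P0 *ᵥ w s + ρ 0) :
    enew = (1 + P0 * QInvProd Q 1 s * Ztot) *ᵥ eold +
      ((P0 * QInvProd Q 1 s) *ᵥ (σ0 + ρ 1) +
        (∑ j ∈ Finset.Icc 2 s, (P0 * QInvProd Q j s) *ᵥ ρ j) + ρ 0) := by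
  have hws := w_formula Q ρ w s hs hw
  rw [henew, hws, hw0]
  have : P0 *ᵥ (QInvProd Q 1 s *ᵥ (Ztot *ᵥ eold + σ0 + ρ 1)) =
      (P0 * QInvProd Q 1 s * Ztot) *ᵥ eold + (P0 * QInvProd Q 1 s) *ᵥ (σ0 + ρ 1) := by
    rw [add_assoc]
    simp only [Matrix.mulVec_add, Matrix.mulVec_mulVec, Matrix.mul_assoc]
  have hsum : P0 *ᵥ (∑ j ∈ Finset.Icc 2 s, QInvProd Q j s *ᵥ ρ j)
      = ∑ j ∈ Finset.Icc 2 s, (P0 * QInvProd Q j s) *ᵥ ρ j := by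
    rw [mulVec_sum']
    exact Finset.sum_congr rfl fun j _ => Matrix.mulVec_mulVec _ _ _
  rw [Matrix.mulVec_add, this, hsum, Matrix.add_mulVec, Matrix.one_mulVec]
  abel
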